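/- arXiv:1908.03703 — 2 statements merged into one kernel-verified Lean document; each statement's English description precedes it below -/
import Mathlib

section
/- Let V = F_q^{q+1} with q ≥ 2. Call a nonzero vector of V simplex if exactly one of its q+1 coordinates is zero. If C is a 2-dimensional subspace of V all of whose nonzero vectors are simplex (a simplex line), then every point of C (1-dimensional subspace of C) is the intersection of C with exactly one coordinate hyperplane, and distinct points correspond to distinct coordinate hyperplanes. -/
/-
A nonzero vector `x` of a simplex line `C` has a single zero coordinate `i`, and every `z ∈ C`
with `z i = 0` is a multiple of `x`: otherwise, scaling `x` to agree with `z` at a coordinate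
`j` with `x j ≠ 0` makes `z - c • x` a nonzero vector of `C` vanishing at both `i` and `j`,
so not simplex. Hence `C ⊓ ker xᵢ = span {x}` exactly for the zero coordinate `i` of `x`.
-/

/-- A vector of `F^n` is *simplex* if exactly one of its coordinates is zero. -/
def SimplexVec {F : Type*} [Field F] [DecidableEq F] {n : ℕ} (x : Fin n → F) : Prop :=
  (Finset.univ.filter (fun i => x i = 0)).card = 1

/-- A *simplex point* is a 1-dimensional subspace spanned by a simplex vector. -/
def SimplexPoint {F : Type*} [Field F] [DecidableEq F] {n : ℕ}
    (P : Submodule F (Fin n → F)) : Prop :=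
  ∃ x : Fin n → F, SimplexVec x ∧ P = Submodule.span F {x}

/-- A *simplex line* is a 2-dimensional subspace all of whose nonzero vectors
are simplex. -/
def SimplexLine {F : Type*} [Field F] [DecidableEq F] {n : ℕ}
    (L : Submodule F (Fin n → F)) : Prop :=
  Module.finrank F ↥L = 2 ∧ ∀ x ∈ L, x ≠ 0 → SimplexVec x

theorem Submodule.exists_ne_zero_eq_span_singleton_of_finrank_eq_one {K V : Type*}
    [DivisionRing K] [AddCommGroup V] [Module K V] {p : Submodule K V}
    (hp : Module.finrank K p = 1) : ∃ x ≠ 0, p = span K {x} := by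
  have : FiniteDimensional K p := Module.finite_of_finrank_eq_succ hp
  obtain ⟨x, hxp, hx⟩ := p.exists_mem_ne_zero_of_ne_bot fun h => by
    subst h; simp at hp
  refine ⟨x, hx, (eq_of_le_of_finrank_le ((span_singleton_le_iff_mem x p).mpr hxp) ?_).symm⟩
  rw [hp, finrank_span_singleton hx]

section

variable {F : Type*} [Field F] [DecidableEq F] {n : ℕ}

theorem simplexVec_iff_existsUnique {x : Fin n → F} : SimplexVec x ↔ ∃! i, x i = 0 :=
  (Fintype.existsUnique_iff_card_one _).symm

theorem SimplexVec.eq_of_apply_eq_zero {x : Fin n → F} (hx : SimplexVec x) {i j : Fin n}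
    (hi : x i = 0) (hj : x j = 0) : i = j :=
  (simplexVec_iff_existsUnique.mp hx).unique hi hj

theorem mem_span_singleton_of_apply_eq_zero {L : Submodule F (Fin n → F)}
    (hL : ∀ x ∈ L, x ≠ 0 → SimplexVec x) {x z : Fin n → F} (hxL : x ∈ L) (hzL : z ∈ L)
    (hx : x ≠ 0) {i : Fin n} (hxi : x i = 0) (hzi : z i = 0) : z ∈ Submodule.span F {x} := by
  obtain ⟨j, hxj⟩ : ∃ j, x j ≠ 0 := Function.ne_iff.mp hx
  set w := z - (z j / x j) • x
  have hwi : w i = 0 := by simp [w, hxi, hzi]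
  have hwj : w j = 0 := by simp [w, div_mul_cancel₀ _ hxj]
  have hw : w = 0 := by
    by_contra hw0
    have hij := (hL w (L.sub_mem hzL (L.smul_mem _ hxL)) hw0).eq_of_apply_eq_zero hwi hwj
    exact hxj (hij ▸ hxi)
  rw [sub_eq_zero] at hw
  exact hw ▸ Submodule.smul_mem _ _ (Submodule.mem_span_singleton_self x)

theorem span_singleton_eq_inf_ker_proj_iff {L : Submodule F (Fin n → F)}
    (hL : ∀ x ∈ L, x ≠ 0 → SimplexVec x) {x : Fin n → F} (hxL : x ∈ L) (hx : x ≠ 0)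
    (i : Fin n) :
    Submodule.span F {x} = L ⊓ LinearMap.ker (LinearMap.proj i : (Fin n → F) →ₗ[F] F) ↔
      x i = 0 := by
  constructor
  · intro h
    exact (Submodule.mem_inf.mp (h ▸ Submodule.mem_span_singleton_self x)).2
  · intro hxi
    refine le_antisymm ((Submodule.span_singleton_le_iff_mem x _).mpr ⟨hxL, hxi⟩) ?_
    rintro z ⟨hzL, hzi⟩
    exact mem_span_singleton_of_apply_eq_zero hL hxL hzL hx hxi hzi

end

theorem point_of_simplex_line_unique_coordinate_hyperplane_general
    (F : Type*) [Field F] [DecidableEq F] (q : ℕ)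
    (C : Submodule F (Fin (q + 1) → F)) (hC : SimplexLine C)
    (p : Submodule F (Fin (q + 1) → F)) (hpC : p ≤ C) (hp : Module.finrank F ↥p = 1) :
    ∃! i : Fin (q + 1),
      p = C ⊓ LinearMap.ker (LinearMap.proj i : (Fin (q + 1) → F) →ₗ[F] F) := by
  obtain ⟨x, hx, rfl⟩ := Submodule.exists_ne_zero_eq_span_singleton_of_finrank_eq_one hp
  have hxC : x ∈ C := hpC (Submodule.mem_span_singleton_self x)
  simp_rw [span_singleton_eq_inf_ker_proj_iff hC.2 hxC hx]
  exact simplexVec_iff_existsUnique.mp (hC.2 x hxC hx)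

/-- Every point of a simplex line is the intersection of the line with exactly
one coordinate hyperplane. -/
theorem point_of_simplex_line_unique_coordinate_hyperplane
    (F : Type*) [Field F] [Fintype F] [DecidableEq F] (q : ℕ) (hq : 2 ≤ q)
    (hF : Fintype.card F = q)
    (C : Submodule F (Fin (q + 1) → F)) (hC : SimplexLine C)
    (p : Submodule F (Fin (q + 1) → F)) (hpC : p ≤ C) (hp : Module.finrank F ↥p = 1) :
    ∃! i : Fin (q + 1),
      p = C ⊓ LinearMap.ker (LinearMap.proj i : (Fin (q + 1) → F) →ₗ[F] F) :=
  point_of_simplex_line_unique_coordinate_hyperplane_general F q C hC p hpC hp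
end

section
/- In V = F_4^5 there do not exist three pairwise distinct simplex lines S_1, S_2, S_3 such that S_1 ∩ S_2, S_1 ∩ S_3, S_2 ∩ S_3 are three pairwise distinct 1-dimensional subspaces. Equivalently, every maximal clique in the graph of simplex lines (adjacency: 1-dimensional intersection) consists of all simplex lines through a fixed simplex point. -/
/-- The graph of simplex lines: two simplex lines are adjacent when their
intersection is 1-dimensional. -/
def simplexLineGraph (F : Type*) [Field F] [DecidableEq F] (n : ℕ) :
    SimpleGraph {L : Submodule F (Fin n → F) // SimplexLine L} :=
  SimpleGraph.fromRel fun L L' =>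
    Module.finrank F ↥((L : Submodule F (Fin n → F)) ⊓ ↑L') = 1

open Module Matrix Finset

section

variable {F : Type*} [Field F]

theorem CharTwo.pi_add_sq [CharP F 2] {ι : Type*} (x y : ι → F) :
    (x + y) ^ 2 = x ^ 2 + y ^ 2 :=
  funext fun l => CharTwo.add_sq (x l) (y l)

section HermitianForm

variable {ι : Type*} [Fintype ι]

def hermOrthogonal (U : Submodule F (ι → F)) : Submodule F (ι → F) where
  carrier := {x | ∀ y ∈ U, x ⬝ᵥ y ^ 2 = 0}
  add_mem' hx hx' y hy := by rw [add_dotProduct, hx y hy, hx' y hy, add_zero]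
  zero_mem' y _ := zero_dotProduct _
  smul_mem' c x hx y hy := by rw [smul_dotProduct, hx y hy, smul_zero]

theorem hermOrthogonal_antitone : Antitone (hermOrthogonal (F := F) (ι := ι)) :=
  fun _ _ hUV _ hx y hy => hx y (hUV hy)

theorem le_hermOrthogonal_of_le {S X Y : Submodule F (ι → F)} (hS : S ≤ hermOrthogonal S)
    (hX : X ≤ S) (hY : Y ≤ S) : X ≤ hermOrthogonal Y :=
  hX.trans (hS.trans (hermOrthogonal_antitone hY))

theorem dotProductBilin_nondegenerate [DecidableEq ι] :
    (dotProductBilin F F : LinearMap.BilinForm F (ι → F)).Nondegenerate :=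
  LinearMap.BilinForm.Nondegenerate.ofSeparatingLeft fun x hx => funext fun i => by
    simpa using hx (Pi.single i 1)

section CharTwo

variable [CharP F 2]

theorem hermOrthogonal_sup (U V : Submodule F (ι → F)) :
    hermOrthogonal (U ⊔ V) = hermOrthogonal U ⊓ hermOrthogonal V := by
  refine le_antisymm (le_inf (hermOrthogonal_antitone le_sup_left)
    (hermOrthogonal_antitone le_sup_right)) fun x ⟨hxU, hxV⟩ y hy => ?_
  obtain ⟨u, hu, v, hv, rfl⟩ := Submodule.mem_sup.mp hy
  rw [CharTwo.pi_add_sq, dotProduct_add, hxU u hu, hxV v hv, add_zero]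

theorem le_hermOrthogonal_self_of_forall {c : F} (hc₀ : c ≠ 0) (hc₁ : c ≠ 1)
    {U : Submodule F (ι → F)} (hU : ∀ w ∈ U, w ⬝ᵥ w ^ 2 = 0) : U ≤ hermOrthogonal U := by
  intro x hx y hy
  have expand (a : F) : a ^ 2 * (x ⬝ᵥ y ^ 2) + a * (y ⬝ᵥ x ^ 2) = 0 := by
    have h := hU _ (U.add_mem hx (U.smul_mem a hy))
    rw [CharTwo.pi_add_sq, smul_pow, add_dotProduct, dotProduct_add, dotProduct_add,
      dotProduct_smul, smul_dotProduct, smul_dotProduct, dotProduct_smul, hU x hx, hU y hy] at h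
    simpa [smul_eq_mul, ← mul_assoc, add_comm] using h
  have : c * (c - 1) * (x ⬝ᵥ y ^ 2) = 0 := by linear_combination expand c - c * expand 1
  simpa [hc₀, sub_ne_zero.mpr hc₁] using this

/-- Squaring maps `U` injectively into its orthogonal for the dot product, whose dimension is
`card ι - finrank U`. -/
theorem two_mul_finrank_le_card [Fintype F] {U : Submodule F (ι → F)}
    (hU : U ≤ hermOrthogonal U) : 2 * finrank F U ≤ Fintype.card ι := by
  classical
  set B : LinearMap.BilinForm F (ι → F) := dotProductBilin F F
  have sq_mem (y : U) : (y : ι → F) ^ 2 ∈ B.orthogonal U := fun u hu => by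
    simpa [B, dotProduct_comm] using hU hu y y.2
  have sq_injective : Function.Injective fun y : U => (⟨_, sq_mem y⟩ : B.orthogonal U) :=
    fun y z h => Subtype.ext <| funext fun l =>
      frobenius_inj F 2 (congrFun (congrArg Subtype.val h) l)
  have hcard := Nat.card_le_card_of_injective _ sq_injective
  rw [Module.natCard_eq_pow_finrank (K := F) (V := U),
    Module.natCard_eq_pow_finrank (K := F) (V := B.orthogonal U),
    LinearMap.BilinForm.finrank_orthogonal dotProductBilin_nondegenerate,
    finrank_fintype_fun_eq_card] at hcard
  have := (Nat.pow_le_pow_iff_right Finite.one_lt_card).mp hcard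
  have := Submodule.finrank_le U
  rw [finrank_fintype_fun_eq_card] at this
  omega

end CharTwo

end HermitianForm

section FieldOfFourElements

variable [Fintype F]

theorem charP_two_of_card_eq_four (hF : Fintype.card F = 4) : CharP F 2 := by
  refine CharTwo.of_one_ne_zero_of_two_eq_zero one_ne_zero (mul_self_eq_zero.mp ?_)
  have h4 := FiniteField.cast_card_eq_zero F
  rw [hF] at h4
  linear_combination h4

theorem exists_ne_zero_ne_one_of_two_lt_card (hF : 2 < Fintype.card F) :
    ∃ c : F, c ≠ 0 ∧ c ≠ 1 := by
  classical
  obtain ⟨c, -, hc⟩ := exists_mem_notMem_of_card_lt_card (s := {0, 1}) (t := univ)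
    (card_le_two.trans_lt hF)
  simp only [mem_insert, mem_singleton, not_or] at hc
  exact ⟨c, hc⟩

theorem dotProduct_sq_self_eq_card [DecidableEq F] (hF : Fintype.card F = 4)
    {ι : Type*} [Fintype ι] (x : ι → F) : x ⬝ᵥ x ^ 2 = #{l | x l ≠ 0} := by
  rw [← sum_boole]
  refine sum_congr rfl fun l _ => ?_
  split_ifs with h
  · simpa [← pow_succ', hF] using FiniteField.pow_card_sub_one_eq_one (x l) h
  · simp [not_not.mp h]

end FieldOfFourElements

section Subspaces

variable {K V : Type*} [DivisionRing K] [AddCommGroup V] [Module K V] [FiniteDimensional K V]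

theorem sup_eq_of_finrank_eq_one {P Q S : Submodule K V} (hP : finrank K P = 1)
    (hQ : finrank K Q = 1) (hS : finrank K S = 2) (hPQ : P ≠ Q) (hPS : P ≤ S) (hQS : Q ≤ S) :
    P ⊔ Q = S := by
  have hdisj := (Submodule.isAtom_iff_finrank_eq_one.mpr hP).disjoint_of_ne
    (Submodule.isAtom_iff_finrank_eq_one.mpr hQ) hPQ
  have := Submodule.finrank_sup_add_finrank_inf_eq P Q
  rw [hdisj.eq_bot, finrank_bot, hP, hQ] at this
  exact Submodule.eq_of_le_of_finrank_eq (sup_le hPS hQS) (by omega)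

theorem finrank_inf_eq_one {A B : Submodule K V} (hA : finrank K A = 2) (hB : finrank K B = 2)
    (hAB : A ≠ B) (h : A ⊓ B ≠ ⊥) : finrank K ↥(A ⊓ B) = 1 := by
  have hpos : 0 < finrank K ↥(A ⊓ B) := Nat.pos_of_ne_zero (by simpa using h)
  have hlt : A ⊓ B < A := inf_lt_left.mpr fun hle =>
    hAB (Submodule.eq_of_le_of_finrank_eq hle (hA.trans hB.symm))
  have := Submodule.finrank_lt_finrank_of_lt hlt
  omega

end Subspaces

section Simplex

variable [DecidableEq F] {n : ℕ}

theorem SimplexVec.card_filter_ne_zero {x : Fin n → F} (hx : SimplexVec x) :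
    #{l | x l ≠ 0} = n - 1 := by
  have := card_filter_add_card_filter_not (s := univ) (fun l => x l = 0)
  rw [hx, card_univ, Fintype.card_fin] at this
  simp only [ne_eq]
  omega

theorem SimplexVec.ne_zero {x : Fin n → F} (hx : SimplexVec x) (hn : 2 ≤ n) : x ≠ 0 := by
  rintro rfl
  simp [SimplexVec] at hx
  omega

theorem SimplexPoint.ne_bot {P : Submodule F (Fin n → F)} (hP : SimplexPoint P) (hn : 2 ≤ n) :
    P ≠ ⊥ := by
  obtain ⟨x, hx, rfl⟩ := hP
  simpa using hx.ne_zero hn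

theorem simplexVec_update_one (i : Fin n) : SimplexVec (Function.update (1 : Fin n → F) i 0) := by
  have : ({l | Function.update (1 : Fin n → F) i 0 l = 0} : Finset (Fin n)) = {i} := by
    ext l
    by_cases h : l = i <;> simp [Function.update_apply, h]
  rw [SimplexVec, this, card_singleton]

theorem SimplexLine.le_hermOrthogonal [Fintype F] (hF : Fintype.card F = 4) (hn : Odd n)
    {L : Submodule F (Fin n → F)} (hL : SimplexLine L) : L ≤ hermOrthogonal L := by
  have := charP_two_of_card_eq_four hF
  obtain ⟨c, hc₀, hc₁⟩ := exists_ne_zero_ne_one_of_two_lt_card (F := F) (by omega)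
  refine le_hermOrthogonal_self_of_forall hc₀ hc₁ fun w hw => ?_
  rcases eq_or_ne w 0 with rfl | hw₀
  · exact zero_dotProduct _
  obtain ⟨k, rfl⟩ := hn
  rw [dotProduct_sq_self_eq_card hF, (hL.2 w hw hw₀).card_filter_ne_zero, Nat.add_sub_cancel,
    Nat.cast_mul, Nat.cast_two, CharTwo.two_eq_zero, zero_mul]

theorem SimplexLine.simplexPoint_of_le {L P : Submodule F (Fin n → F)} (hL : SimplexLine L)
    (hP : finrank F P = 1) (hPL : P ≤ L) : SimplexPoint P := by
  obtain ⟨x, hxP, hx₀⟩ := Submodule.exists_mem_ne_zero_of_ne_bot (p := P)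
    (by rintro rfl; simp at hP)
  exact ⟨x, hL.2 x (hPL hxP) hx₀, eq_span_singleton_of_mem_of_finrank_eq_one hP hxP hx₀⟩

theorem SimplexLine.exists_simplexPoint_le {L : Submodule F (Fin n → F)} (hL : SimplexLine L) :
    ∃ P, SimplexPoint P ∧ P ≤ L := by
  obtain ⟨x, hxL, hx₀⟩ := Submodule.exists_mem_ne_zero_of_ne_bot (p := L)
    (by rintro rfl; simpa using hL.1)
  have hxL' : F ∙ x ≤ L := (Submodule.span_singleton_le_iff_mem _ _).mpr hxL
  exact ⟨_, hL.simplexPoint_of_le (finrank_span_singleton hx₀) hxL', hxL'⟩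

theorem simplexLineGraph_adj {L L' : {L : Submodule F (Fin n → F) // SimplexLine L}} :
    (simplexLineGraph F n).Adj L L' ↔
      L ≠ L' ∧ finrank F ↥((L : Submodule F (Fin n → F)) ⊓ L') = 1 := by
  rw [simplexLineGraph, SimpleGraph.fromRel_adj, inf_comm (L' : Submodule F (Fin n → F)), or_self]

theorem isClique_setOf_le {P : Submodule F (Fin n → F)} (hP : P ≠ ⊥) :
    (simplexLineGraph F n).IsClique {L | P ≤ (L : Submodule F (Fin n → F))} :=
  fun L hL L' hL' hne => simplexLineGraph_adj.mpr ⟨hne, finrank_inf_eq_one L.2.1 L'.2.1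
    (Subtype.coe_injective.ne hne) (ne_bot_of_le_ne_bot hP (le_inf hL hL'))⟩

end Simplex

section SimplexLinesOfF4

variable [Fintype F] [DecidableEq F]

theorem SimplexLine.inf_le_of_finrank_inf_eq_one (hF : Fintype.card F = 4)
    {S₁ S₂ S₃ : Submodule F (Fin 5 → F)} (h₁ : SimplexLine S₁) (h₂ : SimplexLine S₂)
    (h₃ : SimplexLine S₃) (h₁₂ : finrank F ↥(S₁ ⊓ S₂) = 1) (h₁₃ : finrank F ↥(S₁ ⊓ S₃) = 1)
    (h₂₃ : finrank F ↥(S₂ ⊓ S₃) = 1) : S₁ ⊓ S₂ ≤ S₃ := by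
  have := charP_two_of_card_eq_four hF
  by_contra hP
  set W := S₁ ⊓ S₂ ⊔ S₁ ⊓ S₃ ⊔ S₂ ⊓ S₃
  have hS₁ : S₁ ⊓ S₂ ⊔ S₁ ⊓ S₃ = S₁ := sup_eq_of_finrank_eq_one h₁₂ h₁₃ h₁.1
    (fun h => hP (h ▸ inf_le_right)) inf_le_left inf_le_left
  have hS₂ : S₁ ⊓ S₂ ⊔ S₂ ⊓ S₃ = S₂ := sup_eq_of_finrank_eq_one h₁₂ h₂₃ h₂.1
    (fun h => hP (h ▸ inf_le_right)) inf_le_right inf_le_left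
  have hdim : finrank F ↥(S₁ ⊔ S₂) = 3 := by
    have := Submodule.finrank_sup_add_finrank_inf_eq S₁ S₂
    rw [h₁.1, h₂.1, h₁₂] at this
    omega
  have hle : S₁ ⊔ S₂ ≤ W := sup_le (hS₁ ▸ le_sup_left)
    (hS₂ ▸ sup_le (le_sup_left.trans le_sup_left) le_sup_right)
  have iso₁ := h₁.le_hermOrthogonal hF (by decide)
  have iso₂ := h₂.le_hermOrthogonal hF (by decide)
  have iso₃ := h₃.le_hermOrthogonal hF (by decide)
  -- each pair of the three points `S₁ ⊓ S₂`, `S₁ ⊓ S₃`, `S₂ ⊓ S₃` lies on one of the lines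
  have hW : W ≤ hermOrthogonal W := by
    simp only [W, hermOrthogonal_sup, sup_le_iff, le_inf_iff]
    refine ⟨⟨⟨⟨?_, ?_⟩, ?_⟩, ⟨?_, ?_⟩, ?_⟩, ⟨?_, ?_⟩, ?_⟩ <;>
    first
      | exact le_hermOrthogonal_of_le iso₁ inf_le_left inf_le_left
      | exact le_hermOrthogonal_of_le iso₂ inf_le_right inf_le_left
      | exact le_hermOrthogonal_of_le iso₂ inf_le_left inf_le_right
      | exact le_hermOrthogonal_of_le iso₃ inf_le_right inf_le_right
  have hW₂ := two_mul_finrank_le_card hW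
  have hW₃ := Submodule.finrank_mono hle
  rw [Fintype.card_fin] at hW₂
  omega

theorem exists_simplexPoint_le_of_isClique (hF : Fintype.card F = 4)
    {s : Set {L : Submodule F (Fin 5 → F) // SimplexLine L}}
    (hs : (simplexLineGraph F 5).IsClique s) :
    ∃ P, SimplexPoint P ∧ ∀ L ∈ s, P ≤ (L : Submodule F (Fin 5 → F)) := by
  have adj {L L'} (hL : L ∈ s) (hL' : L' ∈ s) (hne : L ≠ L') :=
    (simplexLineGraph_adj.mp (hs hL hL' hne)).2
  rcases s.subsingleton_or_nontrivial with hsub | ⟨L₁, h₁, L₂, h₂, hne⟩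
  · rcases s.eq_empty_or_nonempty with rfl | ⟨L, hL⟩
    · exact ⟨_, ⟨_, simplexVec_update_one 0, rfl⟩, fun _ h => h.elim⟩
    · obtain ⟨P, hP, hPL⟩ := L.2.exists_simplexPoint_le
      exact ⟨P, hP, fun L' hL' => hsub hL hL' ▸ hPL⟩
  refine ⟨_, L₁.2.simplexPoint_of_le (adj h₁ h₂ hne) inf_le_left, fun L hL => ?_⟩
  by_cases hL₁ : L₁ = L
  · exact hL₁ ▸ inf_le_left
  by_cases hL₂ : L₂ = L
  · exact hL₂ ▸ inf_le_right
  exact SimplexLine.inf_le_of_finrank_inf_eq_one hF L₁.2 L₂.2 L.2 (adj h₁ h₂ hne)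
    (adj h₁ hL hL₁) (adj h₂ hL hL₂)

end SimplexLinesOfF4

end

/-- In `F_4^5` there is no triangle of simplex lines with three distinct points
of pairwise intersection; equivalently, every maximal clique of the graph of
simplex lines consists of all simplex lines through a fixed simplex point. -/
theorem no_simplex_triangle_and_max_cliques
    (F : Type*) [Field F] [Fintype F] [DecidableEq F] (hF : Fintype.card F = 4) :
    (¬∃ S₁ S₂ S₃ : Submodule F (Fin 5 → F),
        SimplexLine S₁ ∧ SimplexLine S₂ ∧ SimplexLine S₃ ∧
        S₁ ≠ S₂ ∧ S₁ ≠ S₃ ∧ S₂ ≠ S₃ ∧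
        Module.finrank F ↥(S₁ ⊓ S₂) = 1 ∧ Module.finrank F ↥(S₁ ⊓ S₃) = 1 ∧
        Module.finrank F ↥(S₂ ⊓ S₃) = 1 ∧
        S₁ ⊓ S₂ ≠ S₁ ⊓ S₃ ∧ S₁ ⊓ S₂ ≠ S₂ ⊓ S₃ ∧ S₁ ⊓ S₃ ≠ S₂ ⊓ S₃) ∧
    (∀ s : Set {L : Submodule F (Fin 5 → F) // SimplexLine L},
      (simplexLineGraph F 5).IsClique s →
      (∀ t, (simplexLineGraph F 5).IsClique t → s ⊆ t → s = t) →
      ∃ P : Submodule F (Fin 5 → F), SimplexPoint P ∧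
        s = {L : {L : Submodule F (Fin 5 → F) // SimplexLine L} | P ≤ (L : Submodule F (Fin 5 → F))}) := by
  refine ⟨?_, fun s hs hmax => ?_⟩
  · rintro ⟨S₁, S₂, S₃, h₁, h₂, h₃, -, -, -, h₁₂, h₁₃, h₂₃, hne, -, -⟩
    have hle : S₁ ⊓ S₂ ≤ S₁ ⊓ S₃ :=
      le_inf inf_le_left (SimplexLine.inf_le_of_finrank_inf_eq_one hF h₁ h₂ h₃ h₁₂ h₁₃ h₂₃)
    exact hne (Submodule.eq_of_le_of_finrank_eq hle (h₁₂.trans h₁₃.symm))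
  · obtain ⟨P, hP, hsP⟩ := exists_simplexPoint_le_of_isClique hF hs
    exact ⟨P, hP, hmax _ (isClique_setOf_le (hP.ne_bot (by norm_num))) hsP⟩
end
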